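/- In the market M_k, for every preference P2 of doctor d2 over {w, ∅}, the profile (P1, P2) has exactly k stable allocations. -/

import Mathlib

/-- A one-to-one matching market with contracts: a finite set `X` of contracts,
finite sets `D` of doctors and `H` of hospitals, maps assigning to each contract
its doctor and its hospital, and fixed, publicly known hospital preferences
(strict linear orders over the hospital's contracts together with `none` = ∅). -/
structure Market where
  X : Type
  D : Type
  H : Type
  [fintypeX : Fintype X]
  [fintypeD : Fintype D]
  [fintypeH : Fintype H]
  [decEqX : DecidableEq X]
  [decEqD : DecidableEq D]
  [decEqH : DecidableEq H]
  doc : X → D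
  hos : X → H
  hpref : ∀ h : H, LinearOrder (Option {x : X // hos x = h})

attribute [instance] Market.fintypeX Market.fintypeD Market.fintypeH
attribute [instance] Market.decEqX Market.decEqD Market.decEqH

namespace Market

variable (M : Market)

/-- The contracts involving doctor `d`. -/
abbrev Xd (d : M.D) : Type := {x : M.X // M.doc x = d}

/-- The contracts involving hospital `h`. -/
abbrev Xh (h : M.H) : Type := {x : M.X // M.hos x = h}

/-- A (strict) preference for doctor `d`: a linear order on `X_d ∪ {∅}`,
where `none` plays the role of ∅ and "larger" means "more preferred". -/
abbrev DocPref (d : M.D) : Type := LinearOrder (Option (M.Xd d))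

/-- A profile of doctor preferences. -/
abbrev Prof : Type := ∀ d : M.D, M.DocPref d

/-- `Y` is an allocation: distinct contracts of `Y` involve distinct doctors and
distinct hospitals. -/
def IsAllocation (Y : Finset M.X) : Prop :=
  ∀ x ∈ Y, ∀ y ∈ Y, x ≠ y → M.doc x ≠ M.doc y ∧ M.hos x ≠ M.hos y

/-- `Y_d`: the contract of `Y` involving doctor `d` (there is a unique one when `Y`
is an allocation), or `none` (= ∅) if there is none. -/
noncomputable def allocD (Y : Finset M.X) (d : M.D) : Option (M.Xd d) :=
  if h : ∃ x ∈ Y, M.doc x = d then some ⟨h.choose, h.choose_spec.2⟩ else none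

/-- `Y_h`: the contract of `Y` involving hospital `h`, or `none` (= ∅) if there is none. -/
noncomputable def allocH (Y : Finset M.X) (h : M.H) : Option (M.Xh h) :=
  if hh : ∃ x ∈ Y, M.hos x = h then some ⟨hh.choose, hh.choose_spec.2⟩ else none

/-- Individual rationality: every agent weakly prefers its assignment to ∅. -/
def IndividuallyRational (P : M.Prof) (Y : Finset M.X) : Prop :=
  (∀ d : M.D, (P d).le none (M.allocD Y d)) ∧
  (∀ h : M.H, (M.hpref h).le none (M.allocH Y h))

/-- Contract `x` blocks `Y`: `x ∉ Y` and both the doctor and the hospital of `x`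
strictly prefer `x` to their assignment under `Y`. -/
def Blocks (P : M.Prof) (Y : Finset M.X) (x : M.X) : Prop :=
  x ∉ Y ∧ (P (M.doc x)).lt (M.allocD Y (M.doc x)) (some ⟨x, rfl⟩) ∧
    (M.hpref (M.hos x)).lt (M.allocH Y (M.hos x)) (some ⟨x, rfl⟩)

/-- `Y` is stable: it is an individually rational allocation and no contract blocks it. -/
def IsStable (P : M.Prof) (Y : Finset M.X) : Prop :=
  M.IsAllocation Y ∧ M.IndividuallyRational P Y ∧ ∀ x : M.X, ¬ M.Blocks P Y x

/-- A (matching) mechanism: a map from doctor-preference profiles to sets of contracts. -/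
abbrev Mech : Type := M.Prof → Finset M.X

/-- `φ_d(P)`: the contract assigned to doctor `d` by mechanism `φ` at profile `P`. -/
noncomputable def assign (φ : M.Mech) (P : M.Prof) (d : M.D) : Option (M.Xd d) :=
  M.allocD (φ P) d

/-- `Pd'` is a manipulation of `φ` at true preference `Pd` for doctor `d`:
for some subprofile of the other doctors, reporting `Pd'` yields an outcome that
`d` strictly prefers (under the true `Pd`) to the outcome from reporting `Pd`. -/
def IsManipulation (φ : M.Mech) (d : M.D) (Pd Pd' : M.DocPref d) : Prop :=
  ∃ P : M.Prof,
    Pd.lt (M.assign φ (Function.update P d Pd) d) (M.assign φ (Function.update P d Pd') d)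

/-- `φ` is non-manipulable (strategy-proof). -/
def NonManipulable (φ : M.Mech) : Prop :=
  ∀ (d : M.D) (Pd Pd' : M.DocPref d), ¬ M.IsManipulation φ d Pd Pd'

/-- The option set `O^φ(Pd)` left open by report `Pd` of doctor `d`. -/
def optionSet (φ : M.Mech) (d : M.D) (Pd : M.DocPref d) : Set (Option (M.Xd d)) :=
  {o | ∃ P : M.Prof, o = M.assign φ (Function.update P d Pd) d}

/-- `a` is the `Pd`-worst element of `S` (i.e. `a = W_d(Pd, S)`). -/
def IsWorst (d : M.D) (Pd : M.DocPref d) (S : Set (Option (M.Xd d)))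
    (a : Option (M.Xd d)) : Prop :=
  a ∈ S ∧ ∀ b ∈ S, Pd.le a b

/-- `a` is the `Pd`-best element of `S` (i.e. `a = C_d(Pd, S)`). -/
def IsBest (d : M.D) (Pd : M.DocPref d) (S : Set (Option (M.Xd d)))
    (a : Option (M.Xd d)) : Prop :=
  a ∈ S ∧ ∀ b ∈ S, Pd.le b a

/-- `Pd'` is an obvious manipulation of `φ` at `Pd`: it is a manipulation and either
`W_d(Pd, O^φ(Pd')) P_d W_d(Pd, O^φ(Pd))` or `C_d(Pd, O^φ(Pd')) P_d C_d(Pd, O^φ(Pd))`. -/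
def IsObviousManipulation (φ : M.Mech) (d : M.D) (Pd Pd' : M.DocPref d) : Prop :=
  M.IsManipulation φ d Pd Pd' ∧
    ((∃ a b, M.IsWorst d Pd (M.optionSet φ d Pd') a ∧
        M.IsWorst d Pd (M.optionSet φ d Pd) b ∧ Pd.lt b a) ∨
     (∃ a b, M.IsBest d Pd (M.optionSet φ d Pd') a ∧
        M.IsBest d Pd (M.optionSet φ d Pd) b ∧ Pd.lt b a))

/-- `φ` is not obviously manipulable (NOM). -/
def NOM (φ : M.Mech) : Prop :=
  ∀ (d : M.D) (Pd Pd' : M.DocPref d), ¬ M.IsObviousManipulation φ d Pd Pd'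

open Classical in
/-- The (finite) set of all stable allocations at profile `P`. -/
noncomputable def stableSet (P : M.Prof) : Finset (Finset M.X) :=
  @Finset.filter _ (fun Y => M.IsStable P Y) (Classical.decPred _) Finset.univ

/-- The list of doctor `d`'s assignments across all stable allocations at `P`
(with multiplicity), ordered from best to worst according to `P d`. -/
noncomputable def sortedStable (P : M.Prof) (d : M.D) : List (Option (M.Xd d)) :=
  letI := P d
  ((M.stableSet P).val.map (fun Y => M.allocD Y d)).sort (· ≥ ·)

/-- `X^{(j)}_d`: doctor `d`'s `j`-th best stable assignment at `P` (for `1 ≤ j ≤ k`,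
`k` the number of stable allocations). -/
noncomputable def nthBest (P : M.Prof) (d : M.D) (j : ℕ) : Option (M.Xd d) :=
  ((M.sortedStable P d)[j - 1]?).join

/-- The `j`-th quantile stable allocation `X^{(j)} = ⋃_{d ∈ D} X^{(j)}_d` at `P`. -/
noncomputable def quantileAlloc (P : M.Prof) (j : ℕ) : Finset M.X :=
  Finset.univ.filter (fun x => M.nthBest P (M.doc x) j = some ⟨x, rfl⟩)

/-- The `q`-quantile stable mechanism `φ^q`: at a profile with `k` stable allocations
it selects the `⌈kq⌉`-th quantile stable allocation (with `⌈0⌉` taken to be `1`). -/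
noncomputable def quantileMech (q : ℝ) : M.Mech :=
  fun P => M.quantileAlloc P (max 1 ⌈((M.stableSet P).card : ℝ) * q⌉₊)

/-- `Y` is the doctor-optimal stable allocation at `P`: it is stable and every doctor
weakly prefers it to every other stable allocation. -/
def IsDoctorOptimal (P : M.Prof) (Y : Finset M.X) : Prop :=
  M.IsStable P Y ∧
    ∀ Z : Finset M.X, M.IsStable P Z → ∀ d : M.D, (P d).le (M.allocD Z d) (M.allocD Y d)

/-- `Y` is the hospital-optimal stable allocation at `P`. -/
def IsHospitalOptimal (P : M.Prof) (Y : Finset M.X) : Prop :=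
  M.IsStable P Y ∧
    ∀ Z : Finset M.X, M.IsStable P Z → ∀ h : M.H, (M.hpref h).le (M.allocH Z h) (M.allocH Y h)

end Market

namespace MkMarket

/-- Doctor map for the market `M_k`: contracts `x^t` (encoded `Sum.inl t`) belong to
doctor `d1 = false`; contract `w` (encoded `Sum.inr ()`) belongs to doctor `d2 = true`. -/
def mdoc (k : ℕ) : (Fin k ⊕ Unit) → Bool := Sum.elim (fun _ => false) (fun _ => true)

/-- Hospital map for the market `M_k`: each `x^t` involves hospital `h1 = false`
and `w` involves hospital `h2 = true`. -/
def mhos (k : ℕ) : (Fin k ⊕ Unit) → Bool := Sum.elim (fun _ => false) (fun _ => true)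

/-- Ranking realizing the fixed hospital preferences of `M_k`:
`h1` ranks `x^k P x^{k-1} P … P x^1 P ∅`, and `h2` ranks `w P ∅`. -/
def hrank (k : ℕ) (h : Bool) : Option {x : Fin k ⊕ Unit // mhos k x = h} → ℕ
  | none => 0
  | some ⟨Sum.inl t, _⟩ => t.val + 1
  | some ⟨Sum.inr _, _⟩ => 1

lemma hrank_injective (k : ℕ) (h : Bool) : Function.Injective (hrank k h) := by
  rintro (_ | ⟨(t | u), hx⟩) (_ | ⟨(s | v), hy⟩) hab <;>
    simp only [hrank] at hab
  · rfl
  · omega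
  · exact absurd hab (by omega)
  · omega
  · have : t = s := Fin.ext (by omega)
    subst this; rfl
  · exact Bool.noConfusion (hx.trans hy.symm)
  · exact absurd hab (by omega)
  · exact Bool.noConfusion (hy.trans hx.symm)
  · rfl

/-- The market `M_k` of the proof of the Theorem: doctors `d1 = false`, `d2 = true`,
hospitals `h1 = false`, `h2 = true`, contracts `x^1, …, x^k` (encoded as `Sum.inl 0, …,
Sum.inl (k-1)`) between `d1` and `h1`, and `w` (encoded `Sum.inr ()`) between `d2` and `h2`;
hospital preferences: `x^k P … P x^1 P ∅` for `h1` and `w P ∅` for `h2`. -/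
def Mk (k : ℕ) : Market where
  X := Fin k ⊕ Unit
  D := Bool
  H := Bool
  doc := mdoc k
  hos := mhos k
  hpref h := LinearOrder.lift' (hrank k h) (hrank_injective k h)

/-- The contract `x^{t+1}` of `M_k`, viewed as a contract of doctor `d1 = false`. -/
def xC (k : ℕ) (t : Fin k) : (Mk k).Xd false := ⟨Sum.inl t, rfl⟩

/-- The contract `w` of `M_k`, viewed as a contract of doctor `d2 = true`. -/
def wC (k : ℕ) : (Mk k).Xd true := ⟨Sum.inr (), rfl⟩

/-- Ranking realizing `d1`'s true preference `P1 = x^1, x^2, …, x^k` (then ∅). -/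
def drank1 (k : ℕ) : Option ((Mk k).Xd false) → ℕ
  | none => 0
  | some ⟨Sum.inl t, _⟩ => k - t.val
  | some ⟨Sum.inr _, _⟩ => 0

lemma drank1_injective (k : ℕ) : Function.Injective (drank1 k) := by
  rintro (_ | ⟨(t | u), hx⟩) (_ | ⟨(s | v), hy⟩) hab <;>
    simp only [drank1] at hab
  · rfl
  · have := s.isLt; omega
  · exact Bool.noConfusion hy
  · have := t.isLt; omega
  · have h1 := t.isLt; have h2 := s.isLt
    have : t = s := Fin.ext (by omega)
    subst this; rfl
  · exact Bool.noConfusion hy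
  · exact Bool.noConfusion hx
  · exact Bool.noConfusion hx
  · exact Bool.noConfusion hx

/-- `d1`'s true preference `P1`: `x^1 P x^2 P … P x^k P ∅`. -/
def P1 (k : ℕ) : (Mk k).DocPref false :=
  LinearOrder.lift' (drank1 k) (drank1_injective k)

/-- `Q` is the truncated preference `P1'` of `d1`: it ranks `x^1 P ∅` and declares
every other contract unacceptable (`∅ P x^t` for all `t ≠ 1`). -/
def IsTruncation (k : ℕ) (hk : 0 < k) (Q : (Mk k).DocPref false) : Prop :=
  Q.lt none (some (xC k ⟨0, hk⟩)) ∧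
    ∀ t : Fin k, t.val ≠ 0 → Q.lt (some (xC k t)) none

/-- Ranking realizing the truncated preference `P1' = x^1` (then ∅, then the rest). -/
def drank1' (k : ℕ) : Option ((Mk k).Xd false) → ℕ
  | none => k
  | some ⟨Sum.inl t, _⟩ => if t.val = 0 then k + 1 else k - t.val
  | some ⟨Sum.inr _, _⟩ => 0

lemma drank1'_injective (k : ℕ) : Function.Injective (drank1' k) := by
  rintro (_ | ⟨(t | u), hx⟩) (_ | ⟨(s | v), hy⟩) hab <;>
    simp only [drank1'] at hab
  · rfl
  · have := s.isLt; split_ifs at hab <;> omega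
  · exact Bool.noConfusion hy
  · have := t.isLt; split_ifs at hab <;> omega
  · have h1 := t.isLt; have h2 := s.isLt
    have : t = s := Fin.ext (by split_ifs at hab <;> omega)
    subst this; rfl
  · exact Bool.noConfusion hy
  · exact Bool.noConfusion hx
  · exact Bool.noConfusion hx
  · exact Bool.noConfusion hx

/-- A concrete realization of the truncated preference `P1'`. -/
def P1' (k : ℕ) : (Mk k).DocPref false :=
  LinearOrder.lift' (drank1' k) (drank1'_injective k)

/-- The profile `(Q1, Q2)` of doctor preferences in `M_k`. -/
def prof (k : ℕ) (Q1 : (Mk k).DocPref false) (Q2 : (Mk k).DocPref true) : (Mk k).Prof :=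
  fun d => match d with
  | false => Q1
  | true => Q2

end MkMarket


section AuxLemmas

namespace Market

theorem mem_stableSet' {M : Market} {P : M.Prof} {Y : Finset M.X} :
    Y ∈ M.stableSet P ↔ M.IsStable P Y := by
  classical
  simp [Market.stableSet]

theorem allocD_eq_some' {M : Market} {Y : Finset M.X} {x : M.X} {d : M.D}
    (hx : x ∈ Y) (hd : M.doc x = d) (huniq : ∀ y ∈ Y, M.doc y = d → y = x) :
    M.allocD Y d = some ⟨x, hd⟩ := by
  have h : ∃ z ∈ Y, M.doc z = d := ⟨x, hx, hd⟩
  unfold Market.allocD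
  rw [dif_pos h]
  exact congrArg some (Subtype.ext (huniq _ h.choose_spec.1 h.choose_spec.2))

theorem allocD_eq_none' {M : Market} {Y : Finset M.X} {d : M.D}
    (h : ∀ x ∈ Y, M.doc x ≠ d) : M.allocD Y d = none := by
  unfold Market.allocD
  rw [dif_neg]
  rintro ⟨x, hx, hd⟩
  exact h x hx hd

theorem allocH_eq_some' {M : Market} {Y : Finset M.X} {x : M.X} {h : M.H}
    (hx : x ∈ Y) (hd : M.hos x = h) (huniq : ∀ y ∈ Y, M.hos y = h → y = x) :
    M.allocH Y h = some ⟨x, hd⟩ := by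
  have hh : ∃ z ∈ Y, M.hos z = h := ⟨x, hx, hd⟩
  unfold Market.allocH
  rw [dif_pos hh]
  exact congrArg some (Subtype.ext (huniq _ hh.choose_spec.1 hh.choose_spec.2))

theorem allocH_eq_none' {M : Market} {Y : Finset M.X} {h : M.H}
    (hh : ∀ x ∈ Y, M.hos x ≠ h) : M.allocH Y h = none := by
  unfold Market.allocH
  rw [dif_neg]
  rintro ⟨x, hx, hd⟩
  exact hh x hx hd

end Market

namespace MkMarket

open Classical in
/-- The candidate stable allocation `{x^{t+1}}` (plus `w` if `d2` finds `w` acceptable). -/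
noncomputable def mkAlloc (k : ℕ) (P2 : (Mk k).DocPref true) (t : Fin k) :
    Finset ((Mk k).X) :=
  if P2.lt none (some (wC k)) then {Sum.inl t, Sum.inr ()} else {Sum.inl t}

theorem mem_mkAlloc {k : ℕ} {P2 : (Mk k).DocPref true} {t : Fin k} {y : (Mk k).X} :
    y ∈ mkAlloc k P2 t ↔
      y = Sum.inl t ∨ (P2.lt none (some (wC k)) ∧ y = Sum.inr ()) := by
  unfold mkAlloc
  split_ifs with h <;> simp [Finset.mem_insert, h]
  · exact Finset.mem_insert.trans (or_congr Iff.rfl Finset.mem_singleton)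
  · exact Finset.mem_singleton

theorem isStable_iff (k : ℕ) (hk : 0 < k) (P2 : (Mk k).DocPref true)
    (Y : Finset ((Mk k).X)) :
    (Mk k).IsStable (prof k (P1 k) P2) Y ↔ ∃ t : Fin k, Y = mkAlloc k P2 t := by
  letI := P2
  constructor
  · rintro ⟨hAl, ⟨hIRd, hIRh⟩, hNB⟩
    -- Y contains some x^t
    have hex : ∃ t : Fin k, Sum.inl t ∈ Y := by
      by_contra hno
      push_neg at hno
      have hD : (Mk k).allocD Y false = none := by
        apply Market.allocD_eq_none'
        rintro (s | u) hy
        · exact absurd hy (hno s)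
        · exact fun h => Bool.noConfusion h
      have hH : (Mk k).allocH Y false = none := by
        apply Market.allocH_eq_none'
        rintro (s | u) hy
        · exact absurd hy (hno s)
        · exact fun h => Bool.noConfusion h
      refine hNB (Sum.inl ⟨0, hk⟩) ⟨hno _, ?_, ?_⟩
      · show (P1 k).lt ((Mk k).allocD Y false) (some ⟨Sum.inl ⟨0, hk⟩, rfl⟩)
        rw [hD]
        show drank1 k none < drank1 k (some ⟨Sum.inl ⟨0, hk⟩, rfl⟩)
        simp only [drank1]
        omega
      · show ((Mk k).hpref false).lt ((Mk k).allocH Y false) (some ⟨Sum.inl ⟨0, hk⟩, rfl⟩)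
        rw [hH]
        show hrank k false none < hrank k false (some ⟨Sum.inl ⟨0, hk⟩, rfl⟩)
        simp [hrank]
    obtain ⟨t, ht⟩ := hex
    have huniq : ∀ s : Fin k, Sum.inl s ∈ Y → s = t := by
      intro s hs
      by_contra hne
      exact (hAl _ hs _ ht (fun h => hne (Sum.inl.inj h))).1 rfl
    rcases lt_trichotomy (none : Option ((Mk k).Xd true)) (some (wC k)) with hw | heq | hw
    · -- w acceptable: w must be in Y
      have hwin : Sum.inr () ∈ Y := by
        by_contra hwnot
        have hD : (Mk k).allocD Y true = none := by
          apply Market.allocD_eq_none'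
          rintro (s | u) hy
          · exact fun h => Bool.noConfusion h
          · cases u; exact absurd hy hwnot
        have hH : (Mk k).allocH Y true = none := by
          apply Market.allocH_eq_none'
          rintro (s | u) hy
          · exact fun h => Bool.noConfusion h
          · cases u; exact absurd hy hwnot
        refine hNB (Sum.inr ()) ⟨hwnot, ?_, ?_⟩
        · show P2.lt ((Mk k).allocD Y true) (some ⟨Sum.inr (), rfl⟩)
          rw [hD]
          exact hw
        · show ((Mk k).hpref true).lt ((Mk k).allocH Y true) (some ⟨Sum.inr (), rfl⟩)
          rw [hH]
          show hrank k true none < hrank k true (some ⟨Sum.inr (), rfl⟩)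
          simp [hrank]
      refine ⟨t, ?_⟩
      ext y
      rw [mem_mkAlloc]
      rcases y with s | u
      · constructor
        · intro hy
          exact Or.inl (congrArg Sum.inl (huniq s hy))
        · rintro (h | ⟨-, h⟩)
          · replace h : s = t := Sum.inl.inj h; rw [h]; exact ht
          · exact absurd h (by simp)
      · cases u
        constructor
        · intro _; exact Or.inr ⟨hw, rfl⟩
        · intro _; exact hwin
    · exact absurd heq (by simp)
    · -- w unacceptable: w must not be in Y
      have hwnot : Sum.inr () ∉ Y := by
        intro hwin
        have hD : (Mk k).allocD Y true = some ⟨Sum.inr (), rfl⟩ := by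
          apply Market.allocD_eq_some' hwin rfl
          rintro (s | u) hy
          · exact fun h => Bool.noConfusion h
          · cases u; intro _; rfl
        have := hIRd true
        rw [show (prof k (P1 k) P2 true) = P2 from rfl] at this
        rw [hD] at this
        exact absurd this (not_le_of_gt hw)
      refine ⟨t, ?_⟩
      ext y
      rw [mem_mkAlloc]
      rcases y with s | u
      · constructor
        · intro hy
          exact Or.inl (congrArg Sum.inl (huniq s hy))
        · rintro (h | ⟨-, h⟩)
          · replace h : s = t := Sum.inl.inj h; rw [h]; exact ht
          · exact absurd h (by simp)
      · cases u
        constructor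
        · intro h; exact absurd h hwnot
        · rintro (h | ⟨hw', -⟩)
          · exact absurd h (by simp)
          · exact absurd hw' (lt_asymm hw)
  · rintro ⟨t, rfl⟩
    have hmemt : Sum.inl t ∈ mkAlloc k P2 t := mem_mkAlloc.2 (Or.inl rfl)
    have hDf : (Mk k).allocD (mkAlloc k P2 t) false = some ⟨Sum.inl t, rfl⟩ := by
      apply Market.allocD_eq_some' hmemt rfl
      intro y hy hdy
      rcases mem_mkAlloc.1 hy with h | ⟨-, h⟩
      · exact h
      · subst h; exact absurd hdy (fun h => Bool.noConfusion h)
    have hHf : (Mk k).allocH (mkAlloc k P2 t) false = some ⟨Sum.inl t, rfl⟩ := by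
      apply Market.allocH_eq_some' hmemt rfl
      intro y hy hdy
      rcases mem_mkAlloc.1 hy with h | ⟨-, h⟩
      · exact h
      · subst h; exact absurd hdy (fun h => Bool.noConfusion h)
    refine ⟨?_, ⟨?_, ?_⟩, ?_⟩
    · -- allocation
      intro x hx y hy hne
      rcases mem_mkAlloc.1 hx with h1 | ⟨-, h1⟩ <;>
        rcases mem_mkAlloc.1 hy with h2 | ⟨-, h2⟩ <;> subst h1 <;> subst h2
      · exact absurd rfl hne
      · exact ⟨fun h => Bool.noConfusion h, fun h => Bool.noConfusion h⟩
      · exact ⟨fun h => Bool.noConfusion h, fun h => Bool.noConfusion h⟩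
      · exact absurd rfl hne
    · -- IR doctors
      intro d
      cases d
      · show (P1 k).le none ((Mk k).allocD (mkAlloc k P2 t) false)
        rw [hDf]
        show drank1 k none ≤ drank1 k (some ⟨Sum.inl t, rfl⟩)
        exact Nat.zero_le _
      · show P2.le none ((Mk k).allocD (mkAlloc k P2 t) true)
        rcases lt_trichotomy (none : Option ((Mk k).Xd true)) (some (wC k)) with hw | heq | hw
        · have hDt : (Mk k).allocD (mkAlloc k P2 t) true = some ⟨Sum.inr (), rfl⟩ := by
            apply Market.allocD_eq_some' (mem_mkAlloc.2 (Or.inr ⟨hw, rfl⟩)) rfl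
            intro y hy hdy
            rcases mem_mkAlloc.1 hy with h | ⟨-, h⟩
            · subst h; exact absurd hdy (fun h => Bool.noConfusion h)
            · exact h
          rw [hDt]
          exact le_of_lt hw
        · exact absurd heq (by simp)
        · have hDt : (Mk k).allocD (mkAlloc k P2 t) true = none := by
            apply Market.allocD_eq_none'
            intro y hy
            rcases mem_mkAlloc.1 hy with h | ⟨hw', h⟩
            · subst h; exact fun h => Bool.noConfusion h
            · exact absurd hw' (lt_asymm hw)
          rw [hDt]
    · -- IR hospitals
      intro h
      cases h
      · show ((Mk k).hpref false).le none ((Mk k).allocH (mkAlloc k P2 t) false)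
        rw [hHf]
        show hrank k false none ≤ hrank k false (some ⟨Sum.inl t, rfl⟩)
        exact Nat.zero_le _
      · show ((Mk k).hpref true).le none ((Mk k).allocH (mkAlloc k P2 t) true)
        rcases lt_trichotomy (none : Option ((Mk k).Xd true)) (some (wC k)) with hw | heq | hw
        · have hHt : (Mk k).allocH (mkAlloc k P2 t) true = some ⟨Sum.inr (), rfl⟩ := by
            apply Market.allocH_eq_some' (mem_mkAlloc.2 (Or.inr ⟨hw, rfl⟩)) rfl
            intro y hy hdy
            rcases mem_mkAlloc.1 hy with h | ⟨-, h⟩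
            · subst h; exact absurd hdy (fun h => Bool.noConfusion h)
            · exact h
          rw [hHt]
          show hrank k true none ≤ hrank k true (some ⟨Sum.inr (), rfl⟩)
          exact Nat.zero_le _
        · exact absurd heq (by simp)
        · have hHt : (Mk k).allocH (mkAlloc k P2 t) true = none := by
            apply Market.allocH_eq_none'
            intro y hy
            rcases mem_mkAlloc.1 hy with h | ⟨hw', h⟩
            · subst h; exact fun h => Bool.noConfusion h
            · exact absurd hw' (lt_asymm hw)
          rw [hHt]
          exact ((Mk k).hpref true).le_refl none
    · -- no blocking
      rintro (s | u) ⟨hnot, hd, hh⟩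
      · have hd' : (P1 k).lt ((Mk k).allocD (mkAlloc k P2 t) false)
            (some ⟨Sum.inl s, rfl⟩) := hd
        have hh' : ((Mk k).hpref false).lt ((Mk k).allocH (mkAlloc k P2 t) false)
            (some ⟨Sum.inl s, rfl⟩) := hh
        rw [hDf] at hd'
        rw [hHf] at hh'
        have hd2 : drank1 k (some ⟨Sum.inl t, rfl⟩) < drank1 k (some ⟨Sum.inl s, rfl⟩) := hd'
        have hh2 : hrank k false (some ⟨Sum.inl t, rfl⟩) <
            hrank k false (some ⟨Sum.inl s, rfl⟩) := hh'
        simp only [drank1, hrank] at hd2 hh2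
        have := t.isLt
        have := s.isLt
        omega
      · cases u
        rcases lt_trichotomy (none : Option ((Mk k).Xd true)) (some (wC k)) with hw | heq | hw
        · exact hnot (mem_mkAlloc.2 (Or.inr ⟨hw, rfl⟩))
        · exact absurd heq (by simp)
        · have hDt : (Mk k).allocD (mkAlloc k P2 t) true = none := by
            apply Market.allocD_eq_none'
            intro y hy
            rcases mem_mkAlloc.1 hy with h | ⟨hw', h⟩
            · subst h; exact fun h => Bool.noConfusion h
            · exact absurd hw' (lt_asymm hw)
          have hd' : P2.lt ((Mk k).allocD (mkAlloc k P2 t) true)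
              (some ⟨Sum.inr (), rfl⟩) := hd
          rw [hDt] at hd'
          exact lt_asymm hw hd'

theorem mkAlloc_injective (k : ℕ) (P2 : (Mk k).DocPref true) :
    Function.Injective (mkAlloc k P2) := by
  intro a b h
  have : Sum.inl a ∈ mkAlloc k P2 b := h ▸ mem_mkAlloc.2 (Or.inl rfl)
  rcases mem_mkAlloc.1 this with h' | ⟨-, h'⟩
  · exact Sum.inl.injEq .. ▸ h'
  · exact absurd h' (by simp)

end MkMarket

end AuxLemmas

open MkMarket in
/-- In the market `M_k`, for every preference `P2` of doctor `d2`
(over `{w, ∅}`), the profile `(P1, P2)` has exactly `k` stable allocations. -/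
theorem card_stable_allocations (k : ℕ) (hk : 2 ≤ k) (P2 : (Mk k).DocPref true) :
    ((Mk k).stableSet (prof k (P1 k) P2)).card = k := by
  have hset : (Mk k).stableSet (prof k (P1 k) P2) =
      Finset.image (mkAlloc k P2) Finset.univ := by
    ext Y
    rw [Market.mem_stableSet', isStable_iff k (by omega) P2]
    simp [Finset.mem_image, eq_comm]
  rw [hset, Finset.card_image_of_injective _ (mkAlloc_injective k P2),
    Finset.card_univ, Fintype.card_fin]
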